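/- Let E and E' be real Hilbert spaces, X ⊆ E and Y ⊆ E' nonempty convex sets, and F : E × E' → ℝ a differentiable function that is convex-concave on X × Y, with saddle operator G(x,y) = (∇_x F(x,y), −∇_y F(x,y)). Let T ≥ 1 be an integer, let z_t = (x_t, y_t) ∈ X × Y for t = 0, …, T−1, and let (x̄_T, ȳ_T) = (1/T)·Σ_{t=0}^{T−1} (x_t, y_t). If ε ∈ ℝ satisfies (1/T)·Σ_{t=0}^{T−1} ⟪G(z_t), z_t − z⟫ ≤ ε for every z ∈ X × Y, then F(x̄_T, y) − F(x, ȳ_T) ≤ ε for every (x, y) ∈ X × Y. -/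

import Mathlib

/-!
For each iterate `z_t = (x_t, y_t)`, the first-order conditions of the convex map `F(·, y_t)` and
of the concave map `F(x_t, ·)` give `F(x_t, y) - F(x, y_t) ≤ ⟪G(z_t), z_t - (x, y)⟫`. The left side
is a convex function of `z_t` on `X × Y`, so by Jensen its value at the average is at most the
average of these residuals, which is at most `ε`.
-/

open RealInnerProductSpace

noncomputable section

variable {E E' : Type*} [NormedAddCommGroup E] [InnerProductSpace ℝ E] [CompleteSpace E]
  [NormedAddCommGroup E'] [InnerProductSpace ℝ E'] [CompleteSpace E']

/-- The saddle operator `G(x,y) = (∇ₓ F(x,y), −∇_y F(x,y))` on the Hilbert product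
`WithLp 2 (E × E')`. -/
def saddleOp (F : E × E' → ℝ) (z : WithLp 2 (E × E')) : WithLp 2 (E × E') :=
  (WithLp.equiv 2 (E × E')).symm
    (gradient (fun u => F (u, (WithLp.equiv 2 (E × E') z).2)) (WithLp.equiv 2 (E × E') z).1,
     -gradient (fun v => F ((WithLp.equiv 2 (E × E') z).1, v)) (WithLp.equiv 2 (E × E') z).2)

def prodSet (X : Set E) (Y : Set E') : Set (WithLp 2 (E × E')) :=
  (WithLp.equiv 2 (E × E')) ⁻¹' (X ×ˢ Y)

section FirstOrderCondition

variable {G : Type*} [NormedAddCommGroup G] [NormedSpace ℝ G] {s : Set G} {f : G → ℝ} {a b : G}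

theorem ConvexOn.fderiv_sub_le (hf : ConvexOn ℝ s f) (ha : a ∈ s) (hb : b ∈ s)
    (hfa : DifferentiableAt ℝ f a) : fderiv ℝ f a (b - a) ≤ f b - f a := by
  have hline : Set.Icc (0 : ℝ) 1 ⊆ AffineMap.lineMap a b ⁻¹' s := fun t ht =>
    hf.1.segment_subset ha hb (segment_eq_image_lineMap ℝ a b ▸ ⟨t, ht, rfl⟩)
  have hderiv : HasDerivAt (f ∘ AffineMap.lineMap (k := ℝ) a b) (fderiv ℝ f a (b - a)) 0 := by
    refine HasFDerivAt.comp_hasDerivAt (0 : ℝ) ?_ AffineMap.hasDerivAt_lineMap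
    simpa using hfa.hasFDerivAt
  have hslope := ((hf.comp_affineMap _).subset hline (convex_Icc 0 1)).le_slope_of_hasDerivAt
    (Set.left_mem_Icc.2 zero_le_one) (Set.right_mem_Icc.2 zero_le_one) zero_lt_one hderiv
  simpa [slope_def_field] using hslope

theorem ConcaveOn.sub_le_fderiv (hf : ConcaveOn ℝ s f) (ha : a ∈ s) (hb : b ∈ s)
    (hfa : DifferentiableAt ℝ f a) : f b - f a ≤ fderiv ℝ f a (b - a) := by
  have h := hf.neg.fderiv_sub_le ha hb hfa.neg
  simp only [fderiv_neg, neg_apply, Pi.neg_apply] at h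
  linarith

end FirstOrderCondition

theorem convexOn_saddleGap {A B : Type*} [AddCommGroup A] [Module ℝ A] [AddCommGroup B]
    [Module ℝ B] {X : Set A} {Y : Set B} {F : A × B → ℝ} {x : A} {y : B}
    (hcvx : ConvexOn ℝ X fun u => F (u, y)) (hccv : ConcaveOn ℝ Y fun v => F (x, v)) :
    ConvexOn ℝ (X ×ˢ Y) fun p => F (p.1, y) - F (x, p.2) := by
  have hXY : Convex ℝ (X ×ˢ Y) := hcvx.1.prod hccv.1
  exact ((hcvx.comp_linearMap (LinearMap.fst ℝ A B)).subset
      (Set.prod_subset_preimage_fst X Y) hXY).sub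
    ((hccv.comp_linearMap (LinearMap.snd ℝ A B)).subset (Set.prod_subset_preimage_snd X Y) hXY)

theorem sub_le_inner_saddleOp {X : Set E} {Y : Set E'} {F : E × E' → ℝ}
    {z : WithLp 2 (E × E')} {x : E} {y : E'} (hF : DifferentiableAt ℝ F z.ofLp)
    (hcvx : ConvexOn ℝ X fun u => F (u, z.ofLp.2)) (hccv : ConcaveOn ℝ Y fun v => F (z.ofLp.1, v))
    (hz : z ∈ prodSet X Y) (hx : x ∈ X) (hy : y ∈ Y) :
    F (z.ofLp.1, y) - F (x, z.ofLp.2) ≤ ⟪saddleOp F z, z - WithLp.toLp 2 (x, y)⟫ := by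
  obtain ⟨hz₁, hz₂⟩ : z.ofLp.1 ∈ X ∧ z.ofLp.2 ∈ Y := hz
  have hFx : DifferentiableAt ℝ (fun u => F (u, z.ofLp.2)) z.ofLp.1 :=
    hF.comp z.ofLp.1 (differentiableAt_id.prodMk (differentiableAt_const _))
  have hFy : DifferentiableAt ℝ (fun v => F (z.ofLp.1, v)) z.ofLp.2 :=
    hF.comp z.ofLp.2 ((differentiableAt_const _).prodMk differentiableAt_id)
  have hinner : ⟪saddleOp F z, z - WithLp.toLp 2 (x, y)⟫ =
      -fderiv ℝ (fun u => F (u, z.ofLp.2)) z.ofLp.1 (x - z.ofLp.1) +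
        fderiv ℝ (fun v => F (z.ofLp.1, v)) z.ofLp.2 (y - z.ofLp.2) := by
    simp [saddleOp, inner_gradient_left]
  linarith [hcvx.fderiv_sub_le hz₁ hx hFx, hccv.sub_le_fderiv hz₂ hy hFy]

theorem averaged_vi_residual_bounds_duality_gap_general
    (X : Set E) (Y : Set E')
    (F : E × E' → ℝ) (hFdiff : Differentiable ℝ F)
    (hcvx : ∀ y ∈ Y, ConvexOn ℝ X (fun x => F (x, y)))
    (hccv : ∀ x ∈ X, ConcaveOn ℝ Y (fun y => F (x, y)))
    (T : ℕ) (hT : 1 ≤ T)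
    (z : ℕ → WithLp 2 (E × E')) (hz : ∀ t < T, z t ∈ prodSet X Y)
    (ε : ℝ)
    (hres : ∀ w ∈ prodSet X Y,
      (T : ℝ)⁻¹ * ∑ t ∈ Finset.range T, ⟪saddleOp F (z t), z t - w⟫ ≤ ε) :
    ∀ x ∈ X, ∀ y ∈ Y,
      F ((WithLp.equiv 2 (E × E') ((T : ℝ)⁻¹ • ∑ t ∈ Finset.range T, z t)).1, y) -
        F (x, (WithLp.equiv 2 (E × E') ((T : ℝ)⁻¹ • ∑ t ∈ Finset.range T, z t)).2) ≤ ε := by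
  intro x hx y hy
  have hz' : ∀ t ∈ Finset.range T, z t ∈ prodSet X Y := fun t ht => hz t (Finset.mem_range.1 ht)
  have hT₀ : (0 : ℝ) < T := by exact_mod_cast hT
  have hgap : ConvexOn ℝ (prodSet X Y) fun w => F (w.ofLp.1, y) - F (x, w.ofLp.2) :=
    (convexOn_saddleGap (hcvx y hy) (hccv x hx)).comp_linearMap
      (WithLp.linearEquiv 2 ℝ (E × E')).toLinearMap
  have hjensen := hgap.map_sum_le (t := Finset.range T) (w := fun _ => (T : ℝ)⁻¹) (p := z)
    (fun _ _ => by positivity) (by simp [hT₀.ne']) hz'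
  simp only [← Finset.smul_sum, ← Finset.mul_sum, smul_eq_mul] at hjensen
  calc _ ≤ (T : ℝ)⁻¹ * ∑ t ∈ Finset.range T, (F ((z t).ofLp.1, y) - F (x, (z t).ofLp.2)) :=
        hjensen
    _ ≤ (T : ℝ)⁻¹ * ∑ t ∈ Finset.range T, ⟪saddleOp F (z t), z t - WithLp.toLp 2 (x, y)⟫ := by
        gcongr with t ht
        exact sub_le_inner_saddleOp (hFdiff _) (hcvx _ (hz' t ht).2) (hccv _ (hz' t ht).1)
          (hz' t ht) hx hy
    _ ≤ ε := hres _ ⟨hx, hy⟩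

/-- Lemma B.2.  If the averaged variational-inequality residuals of points
`z_0, …, z_{T−1} ∈ X × Y` are at most `ε`, then the duality gap of the averaged iterate is at
most `ε`. -/
theorem averaged_vi_residual_bounds_duality_gap
    (X : Set E) (Y : Set E') (hXne : X.Nonempty) (hYne : Y.Nonempty)
    (hXcv : Convex ℝ X) (hYcv : Convex ℝ Y)
    (F : E × E' → ℝ) (hFdiff : Differentiable ℝ F)
    (hcvx : ∀ y ∈ Y, ConvexOn ℝ X (fun x => F (x, y)))
    (hccv : ∀ x ∈ X, ConcaveOn ℝ Y (fun y => F (x, y)))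
    (T : ℕ) (hT : 1 ≤ T)
    (z : ℕ → WithLp 2 (E × E')) (hz : ∀ t < T, z t ∈ prodSet X Y)
    (ε : ℝ)
    (hres : ∀ w ∈ prodSet X Y,
      (T : ℝ)⁻¹ * ∑ t ∈ Finset.range T, ⟪saddleOp F (z t), z t - w⟫ ≤ ε) :
    ∀ x ∈ X, ∀ y ∈ Y,
      F ((WithLp.equiv 2 (E × E') ((T : ℝ)⁻¹ • ∑ t ∈ Finset.range T, z t)).1, y) -
        F (x, (WithLp.equiv 2 (E × E') ((T : ℝ)⁻¹ • ∑ t ∈ Finset.range T, z t)).2) ≤ ε :=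
  averaged_vi_residual_bounds_duality_gap_general X Y F hFdiff hcvx hccv T hT z hz ε hres
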